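/- Let q ∈ [1,∞), p ∈ (q,∞), r ∈ (1,∞) and α ∈ (0,1) satisfy α·(1/q + 1 − 1/r) = 1/q − 1/p. Then there exists C ∈ (0,∞) such that for every u ∈ W_0^{1,r}((0,1),ℝ) with weak derivative g (i.e. u(x) = ∫_0^x g(t) dt for all x ∈ [0,1], u(1) = 0, g ∈ L^r((0,1),ℝ)) one has ‖u‖_{L^p((0,1))} ≤ C·(‖u‖_{L^r((0,1))} + ‖g‖_{L^r((0,1))})^α · ‖u‖_{L^q((0,1))}^{1−α}. -/

import Mathlib

/-!
Since `u` is a primitive of `g ∈ L^r`, Hölder's inequality makes `u` Hölder continuous with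
exponent `γ = 1 - 1/r` and constant `G = ‖g‖_r`. Let `M = |u x₀|` be the maximum of `|u|` on
`[0, 1]`. Averaging `M ≤ |u x| + G` gives `M ≤ ‖u‖_1 + G ≤ A := ‖u‖_r + G`, and on an interval
of length `L = (M / 2A)^{1/γ}` around `x₀` we still have `|u| ≥ M / 2`, so
`(M/2)^q L ≤ ‖u‖_q^q`; solving for `M` gives `M ≤ 2 A^β ‖u‖_q^{1-β}` with `β = 1/(qγ + 1)`.
Finally `‖u‖_p^p ≤ M^{p-q} ‖u‖_q^q`, and the exponent relation says exactly `α = β (p - q)/p`.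
-/

open MeasureTheory Set
open scoped Interval

theorem setIntegral_abs_le_rpow_mul_measureReal_rpow {X : Type*} [MeasurableSpace X]
    {μ : Measure X} {f : X → ℝ} {r : ℝ} (hr : 1 < r) {s t : Set X} (hst : s ≤ᵐ[μ] t)
    (hs : μ s ≠ ⊤) (hf : MemLp f (ENNReal.ofReal r) (μ.restrict t)) :
    ∫ x in s, |f x| ∂μ ≤ (∫ x in t, |f x| ^ r ∂μ) ^ (1 / r) * μ.real s ^ (1 - 1 / r) := by
  have hrr' := Real.HolderConjugate.conjExponent hr
  have : IsFiniteMeasure (μ.restrict s) := isFiniteMeasure_restrict.mpr hs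
  have hfs : MemLp f (ENNReal.ofReal r) (μ.restrict s) :=
    hf.mono_measure (Measure.restrict_mono_ae hst)
  have holder := integral_mul_le_Lp_mul_Lq_of_nonneg hrr' (f := fun x => |f x|)
    (g := fun _ => (1 : ℝ)) (ae_of_all _ fun _ => abs_nonneg _) (ae_of_all _ fun _ => zero_le_one)
    hfs.abs (memLp_const 1)
  simp only [mul_one, Real.one_rpow, integral_const, smul_eq_mul, measureReal_restrict_apply_univ]
    at holder
  rw [one_div r.conjExponent, ← hrr'.one_sub_inv, ← one_div] at holder
  refine holder.trans (mul_le_mul_of_nonneg_right ?_ (by positivity))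
  have hint : IntegrableOn (fun x => |f x| ^ r) t μ := by
    simpa [IntegrableOn, Real.norm_eq_abs, ENNReal.toReal_ofReal (by linarith : 0 ≤ r)] using
      hf.integrable_norm_rpow (by simp; linarith) ENNReal.ofReal_ne_top
  exact Real.rpow_le_rpow (integral_nonneg fun _ => by positivity)
    (setIntegral_mono_set hint (ae_of_all _ fun _ => by positivity) hst) (by positivity)

theorem abs_intervalIntegral_le_rpow_mul_abs_sub_rpow {g : ℝ → ℝ} {r : ℝ} (hr : 1 < r)
    {t : Set ℝ} (hg : MemLp g (ENNReal.ofReal r) (volume.restrict t)) {x y : ℝ}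
    (hxy : Ι x y ≤ᵐ[volume] t) :
    |∫ s in x..y, g s| ≤ (∫ s in t, |g s| ^ r) ^ (1 / r) * |y - x| ^ (1 - 1 / r) := by
  have := setIntegral_abs_le_rpow_mul_measureReal_rpow hr hxy (by simp [Real.volume_uIoc]) hg
  rw [measureReal_def, Real.volume_uIoc, ENNReal.toReal_ofReal (abs_nonneg _)] at this
  calc |∫ s in x..y, g s| ≤ ∫ s in Ι x y, |g s| := by
        simpa only [Real.norm_eq_abs] using
          intervalIntegral.norm_integral_le_integral_norm_uIoc (f := g)
    _ ≤ _ := this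

theorem integrableOn_Icc_of_memLp_Ioo {g : ℝ → ℝ} {r a b : ℝ} (hr : 1 ≤ r)
    (hg : MemLp g (ENNReal.ofReal r) (volume.restrict (Ioo a b))) : IntegrableOn g (Icc a b) := by
  rw [integrableOn_Icc_iff_integrableOn_Ioo]
  exact hg.integrable (by simpa using ENNReal.ofReal_le_ofReal hr)

section Primitive

variable {u g : ℝ → ℝ} {r a b : ℝ}

theorem continuousOn_of_eq_primitive (hr : 1 ≤ r)
    (hg : MemLp g (ENNReal.ofReal r) (volume.restrict (Ioo a b)))
    (hu : ∀ x ∈ Icc a b, u x = ∫ t in a..x, g t) : ContinuousOn u (Icc a b) := by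
  rcases le_or_gt a b with hab | hba
  · rw [← uIcc_of_le hab] at hu ⊢
    refine (intervalIntegral.continuousOn_primitive_interval ?_).congr hu
    rw [uIcc_of_le hab]
    exact integrableOn_Icc_of_memLp_Ioo hr hg
  · simp [Icc_eq_empty_of_lt hba]

theorem abs_sub_le_of_eq_primitive (hr : 1 < r)
    (hg : MemLp g (ENNReal.ofReal r) (volume.restrict (Ioo a b)))
    (hu : ∀ x ∈ Icc a b, u x = ∫ t in a..x, g t) {x y : ℝ} (hx : x ∈ Icc a b) (hy : y ∈ Icc a b) :
    |u y - u x| ≤ (∫ t in Ioo a b, |g t| ^ r) ^ (1 / r) * |y - x| ^ (1 - 1 / r) := by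
  have hg_int := integrableOn_Icc_of_memLp_Ioo hr.le hg
  have hint {z : ℝ} (hz : z ∈ Icc a b) : IntervalIntegrable g volume a z :=
    (hg_int.mono_set (uIcc_subset_Icc (left_mem_Icc.2 (hx.1.trans hx.2)) hz)).intervalIntegrable
  rw [hu y hy, hu x hx, intervalIntegral.integral_interval_sub_left (hint hy) (hint hx)]
  refine abs_intervalIntegral_le_rpow_mul_abs_sub_rpow hr hg ?_
  exact (LE.le.eventuallyLE (uIoc_subset_uIcc.trans (uIcc_subset_Icc hx hy))).trans
    Ioo_ae_eq_Icc.symm.le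

end Primitive

theorem setIntegral_abs_rpow_le_mul {X : Type*} [MeasurableSpace X] {μ : Measure X}
    {f : X → ℝ} {s : Set X} {M p q : ℝ} (hs : MeasurableSet s) (hq : 0 < q) (hqp : q ≤ p)
    (hfM : ∀ x ∈ s, |f x| ≤ M) (hp_int : IntegrableOn (fun x => |f x| ^ p) s μ)
    (hq_int : IntegrableOn (fun x => |f x| ^ q) s μ) :
    ∫ x in s, |f x| ^ p ∂μ ≤ M ^ (p - q) * ∫ x in s, |f x| ^ q ∂μ := by
  rw [← integral_const_mul]
  refine setIntegral_mono_on hp_int (hq_int.const_mul _) hs fun x hx => ?_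
  calc |f x| ^ p = |f x| ^ (p - q) * |f x| ^ q := by
        rw [← Real.rpow_add' (abs_nonneg _) (by linarith), sub_add_cancel]
    _ ≤ M ^ (p - q) * |f x| ^ q := by gcongr; exact hfM x hx

theorem ContinuousOn.integrableOn_Ioo_abs_rpow {u : ℝ → ℝ} {a b s : ℝ}
    (hu : ContinuousOn u (Icc a b)) (hs : 0 ≤ s) :
    IntegrableOn (fun x => |u x| ^ s) (Ioo a b) :=
  (hu.abs.rpow_const fun _ _ => Or.inr hs).integrableOn_Icc.mono_set Ioo_subset_Icc_self

section UnitInterval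

variable {u : ℝ → ℝ} {G γ x₀ : ℝ} (hG : 0 ≤ G) (hγ : 0 ≤ γ) (hx₀ : x₀ ∈ Icc (0 : ℝ) 1)
  (hHolder : ∀ x ∈ Icc (0 : ℝ) 1, |u x - u x₀| ≤ G * |x - x₀| ^ γ)
include hG hγ hx₀ hHolder

theorem abs_le_setIntegral_abs_add (hint : IntegrableOn u (Ioo 0 1)) :
    |u x₀| ≤ (∫ x in Ioo (0 : ℝ) 1, |u x|) + G := by
  have hpt : ∀ x ∈ Ioo (0 : ℝ) 1, |u x₀| - G ≤ |u x| := fun x hx => by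
    have hx' := Ioo_subset_Icc_self hx
    have hdist : |x - x₀| ^ γ ≤ 1 :=
      Real.rpow_le_one (abs_nonneg _) (abs_sub_le_iff.2 ⟨by linarith [hx₀.1, hx'.2],
        by linarith [hx₀.2, hx'.1]⟩) hγ
    have hrev := abs_sub_abs_le_abs_sub (u x₀) (u x)
    rw [abs_sub_comm] at hrev
    linarith [hHolder x hx', mul_le_of_le_one_right hG hdist]
  have := setIntegral_mono_on (integrableOn_const (by simp)) hint.abs measurableSet_Ioo hpt
  simp only [integral_const, measureReal_restrict_apply_univ,
    Real.volume_real_Ioo_of_le zero_le_one, smul_eq_mul, sub_zero, one_mul] at this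
  linarith

theorem rpow_mul_le_setIntegral_abs_rpow {q L : ℝ} (hq : 0 ≤ q)
    (hint : IntegrableOn (fun x => |u x| ^ q) (Ioo 0 1)) (hL : L ∈ Icc (0 : ℝ) 1)
    (hGL : G * L ^ γ ≤ |u x₀| / 2) :
    (|u x₀| / 2) ^ q * L ≤ ∫ x in Ioo (0 : ℝ) 1, |u x| ^ q := by
  set a := min x₀ (1 - L)
  have ha : 0 ≤ a := le_min hx₀.1 (by linarith [hL.2])
  have haL : a + L ≤ 1 := by linarith [min_le_right x₀ (1 - L)]
  have hsub : Ioo a (a + L) ⊆ Ioo 0 1 := Ioo_subset_Ioo ha haL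
  have hax₀ : a ≤ x₀ := min_le_left _ _
  have hx₀a : x₀ ≤ a + L := by
    rcases min_choice x₀ (1 - L) with h | h <;> simp only [a, h] <;> linarith [hx₀.2, hL.1]
  have hpt : ∀ x ∈ Ioo a (a + L), (|u x₀| / 2) ^ q ≤ |u x| ^ q := fun x hx => by
    have hnear : |x - x₀| ≤ L := abs_sub_le_iff.2 ⟨by linarith [hx.2], by linarith [hx.1]⟩
    have hrev := abs_sub_abs_le_abs_sub (u x₀) (u x)
    rw [abs_sub_comm] at hrev
    have hGx : G * |x - x₀| ^ γ ≤ G * L ^ γ := by gcongr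
    gcongr
    linarith [hHolder x (Ioo_subset_Icc_self (hsub hx))]
  calc (|u x₀| / 2) ^ q * L = ∫ _ in Ioo a (a + L), (|u x₀| / 2) ^ q := by
        simp [Real.volume_real_Ioo_of_le (by linarith [hL.1] : a ≤ a + L), mul_comm]
    _ ≤ ∫ x in Ioo a (a + L), |u x| ^ q :=
        setIntegral_mono_on (integrableOn_const (by simp)) (hint.mono_set hsub)
          measurableSet_Ioo hpt
    _ ≤ ∫ x in Ioo (0 : ℝ) 1, |u x| ^ q :=
        setIntegral_mono_set hint (ae_of_all _ fun _ => by positivity) hsub.eventuallyLE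

end UnitInterval

theorem le_two_mul_rpow_mul_rpow_of_forall_rpow_mul_le {M G A N q γ : ℝ} (hq : 0 < q)
    (hγ : 0 < γ) (hM : 0 ≤ M) (hN : 0 ≤ N) (hMA : M ≤ A) (hGA : G ≤ A)
    (h : ∀ L ∈ Icc (0 : ℝ) 1, G * L ^ γ ≤ M / 2 → (M / 2) ^ q * L ≤ N ^ q) :
    M ≤ 2 * A ^ (1 / (q * γ + 1)) * N ^ (1 - 1 / (q * γ + 1)) := by
  rcases hM.eq_or_lt with rfl | hM0
  · positivity
  have hA : 0 < A := hM0.trans_le hMA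
  set L := (M / (2 * A)) ^ (1 / γ)
  have hLγ : L ^ γ = M / (2 * A) := by
    rw [← Real.rpow_mul (by positivity), one_div_mul_cancel hγ.ne', Real.rpow_one]
  have hL : L ∈ Icc (0 : ℝ) 1 := ⟨by positivity, Real.rpow_le_one (by positivity)
    ((div_le_one (by positivity)).2 (by linarith)) (by positivity)⟩
  have key := h L hL <| by
    rw [hLγ]
    calc G * (M / (2 * A)) ≤ A * (M / (2 * A)) := by gcongr
      _ = M / 2 := by field_simp
  have hN0 : 0 < N := by
    rcases hN.eq_or_lt with rfl | hN0
    · rw [Real.zero_rpow hq.ne'] at key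
      have : 0 < (M / 2) ^ q * L := by positivity
      linarith
    · exact hN0
  have hlog := Real.log_le_log (by positivity) key
  rw [Real.log_mul (by positivity) (by positivity), Real.log_rpow (by positivity),
    Real.log_rpow (by positivity), Real.log_rpow hN0, Real.log_div hM0.ne' two_ne_zero,
    Real.log_div hM0.ne' (by positivity), Real.log_mul two_ne_zero hA.ne'] at hlog
  rw [← Real.log_le_log_iff hM0 (by positivity), Real.log_mul (by positivity) (by positivity),
    Real.log_mul two_ne_zero (by positivity), Real.log_rpow hA, Real.log_rpow hN0]
  have hqγ : 0 < q * γ + 1 := by positivity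
  have hcleared : (q * γ + 1) * (Real.log M - Real.log 2) ≤ Real.log A + q * γ * Real.log N := by
    have := mul_le_mul_of_nonneg_left hlog hγ.le
    field_simp at this
    linarith
  have hrhs : Real.log 2 + 1 / (q * γ + 1) * Real.log A + (1 - 1 / (q * γ + 1)) * Real.log N =
      Real.log 2 + (Real.log A + q * γ * Real.log N) / (q * γ + 1) := by
    field_simp
    ring
  rw [hrhs, ← sub_le_iff_le_add', le_div_iff₀ hqγ]
  linarith

theorem rpow_one_div_le_two_mul_rpow_mul_rpow {I M A N p q α β : ℝ} (hq : 0 < q) (hqp : q < p)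
    (hβ : 0 < β) (hI : 0 ≤ I) (hM : 0 ≤ M) (hA : 0 ≤ A) (hN : 0 ≤ N)
    (hIM : I ≤ M ^ (p - q) * N ^ q) (hMA : M ≤ 2 * A ^ β * N ^ (1 - β))
    (hα : p * α = (p - q) * β) :
    I ^ (1 / p) ≤ 2 * A ^ α * N ^ (1 - α) := by
  have hp : 0 < p := hq.trans hqp
  rcases hI.eq_or_lt with rfl | hI0
  · rw [Real.zero_rpow (one_div_ne_zero hp.ne')]; positivity
  have hN0 : 0 < N := by
    rcases hN.eq_or_lt with rfl | hN0
    · rw [Real.zero_rpow hq.ne', mul_zero] at hIM; linarith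
    · exact hN0
  have hM0 : 0 < M := by
    rcases hM.eq_or_lt with rfl | hM0
    · rw [Real.zero_rpow (by linarith), zero_mul] at hIM; linarith
    · exact hM0
  have hA0 : 0 < A := by
    rcases hA.eq_or_lt with rfl | hA0
    · rw [Real.zero_rpow hβ.ne', mul_zero, zero_mul] at hMA; linarith
    · exact hA0
  have hlogI := Real.log_le_log hI0 hIM
  have hlogM := Real.log_le_log hM0 hMA
  rw [Real.log_mul (by positivity) (by positivity), Real.log_rpow hM0, Real.log_rpow hN0] at hlogI
  rw [Real.log_mul (by positivity) (by positivity), Real.log_mul (by positivity) (by positivity),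
    Real.log_rpow hA0, Real.log_rpow hN0] at hlogM
  rw [← Real.log_le_log_iff (by positivity) (by positivity), Real.log_rpow hI0,
    Real.log_mul (by positivity) (by positivity), Real.log_mul (by positivity) (by positivity),
    Real.log_rpow hA0, Real.log_rpow hN0]
  have hlog2 : 0 ≤ Real.log 2 := Real.log_nonneg one_le_two
  rw [one_div_mul_eq_div, div_le_iff₀ hp]
  linarith [mul_le_mul_of_nonneg_left hlogM (sub_nonneg.2 hqp.le), mul_nonneg hq.le hlog2,
    congrArg (· * Real.log A) hα, congrArg (· * Real.log N) hα]

theorem abs_le_two_mul_rpow_mul_rpow_of_eq_primitive {u g : ℝ → ℝ} {q r : ℝ} (hq : 0 < q)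
    (hr : 1 < r) (hg : MemLp g (ENNReal.ofReal r) (volume.restrict (Ioo 0 1)))
    (hu : ∀ x ∈ Icc (0 : ℝ) 1, u x = ∫ t in (0 : ℝ)..x, g t) {x : ℝ} (hx : x ∈ Icc (0 : ℝ) 1) :
    |u x| ≤ 2 * ((∫ t in Ioo (0 : ℝ) 1, |u t| ^ r) ^ (1 / r)
        + (∫ t in Ioo (0 : ℝ) 1, |g t| ^ r) ^ (1 / r)) ^ (1 / (q * (1 - 1 / r) + 1))
      * ((∫ t in Ioo (0 : ℝ) 1, |u t| ^ q) ^ (1 / q)) ^ (1 - 1 / (q * (1 - 1 / r) + 1)) := by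
  have hγ : 0 < 1 - 1 / r := by rw [sub_pos, div_lt_one (by linarith)]; exact hr
  have hu_cont := continuousOn_of_eq_primitive hr.le hg hu
  obtain ⟨x₀, hx₀, hmax⟩ :=
    isCompact_Icc.exists_isMaxOn (nonempty_Icc.2 zero_le_one) hu_cont.abs
  have hHolder := fun y (hy : y ∈ Icc (0 : ℝ) 1) => abs_sub_le_of_eq_primitive hr hg hu hx₀ hy
  have hu_Lr : MemLp u (ENNReal.ofReal r) (volume.restrict (Ioo 0 1)) :=
    .of_bound ((hu_cont.mono Ioo_subset_Icc_self).aestronglyMeasurable measurableSet_Ioo) _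
      (ae_restrict_of_forall_mem measurableSet_Ioo fun y hy => hmax (Ioo_subset_Icc_self hy))
  have hu_L1 := setIntegral_abs_le_rpow_mul_measureReal_rpow hr
    (Filter.EventuallyLE.refl _ (Ioo (0 : ℝ) 1)) (by simp) hu_Lr
  rw [Real.volume_real_Ioo_of_le zero_le_one, sub_zero, Real.one_rpow, mul_one] at hu_L1
  set G := (∫ t in Ioo (0 : ℝ) 1, |g t| ^ r) ^ (1 / r)
  set N := (∫ t in Ioo (0 : ℝ) 1, |u t| ^ q) ^ (1 / q) with hN
  have hG : 0 ≤ G := by positivity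
  have hMA := (abs_le_setIntegral_abs_add hG hγ.le hx₀ hHolder
    (hu_cont.integrableOn_Icc.mono_set Ioo_subset_Icc_self)).trans (add_le_add_left hu_L1 _)
  have hNq : N ^ q = ∫ t in Ioo (0 : ℝ) 1, |u t| ^ q := by
    rw [hN, one_div, Real.rpow_inv_rpow (by positivity) hq.ne']
  have hnear : ∀ L ∈ Icc (0 : ℝ) 1, G * L ^ (1 - 1 / r) ≤ |u x₀| / 2 →
      (|u x₀| / 2) ^ q * L ≤ N ^ q := fun L hL hGL => hNq ▸
    rpow_mul_le_setIntegral_abs_rpow hG hγ.le hx₀ hHolder hq.le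
      (hu_cont.integrableOn_Ioo_abs_rpow hq.le) hL hGL
  exact (hmax hx).trans <| le_two_mul_rpow_mul_rpow_of_forall_rpow_mul_le hq hγ (abs_nonneg _)
    (by positivity) hMA (le_add_of_nonneg_left (by positivity)) hnear

theorem stmt9_general (q p r α : ℝ) (hq : 1 ≤ q) (hp : q < p) (hr : 1 < r)
    (heq : α * (1 / q + 1 - 1 / r) = 1 / q - 1 / p) :
    ∃ C : ℝ, 0 < C ∧ ∀ u g : ℝ → ℝ,
      MemLp g (ENNReal.ofReal r) (volume.restrict (Set.Ioo (0 : ℝ) 1)) →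
      (∀ x ∈ Set.Icc (0 : ℝ) 1, u x = ∫ t in (0 : ℝ)..x, g t) →
      u 1 = 0 →
      (∫ t in Set.Ioo (0 : ℝ) 1, |u t| ^ p) ^ (1 / p)
        ≤ C * ((∫ t in Set.Ioo (0 : ℝ) 1, |u t| ^ r) ^ (1 / r)
                + (∫ t in Set.Ioo (0 : ℝ) 1, |g t| ^ r) ^ (1 / r)) ^ α
            * ((∫ t in Set.Ioo (0 : ℝ) 1, |u t| ^ q) ^ (1 / q)) ^ (1 - α) := by
  refine ⟨2, two_pos, fun u g hg hu _ => ?_⟩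
  have hq0 : 0 < q := by linarith
  have hγ : 0 < 1 - 1 / r := by rw [sub_pos, div_lt_one (by linarith)]; exact hr
  have hu_cont := continuousOn_of_eq_primitive hr.le hg hu
  have hLp := setIntegral_abs_rpow_le_mul measurableSet_Ioo hq0 hp.le
    (fun x hx => abs_le_two_mul_rpow_mul_rpow_of_eq_primitive hq0 hr hg hu (Ioo_subset_Icc_self hx))
    (hu_cont.integrableOn_Ioo_abs_rpow (by linarith)) (hu_cont.integrableOn_Ioo_abs_rpow hq0.le)
  have hNq : ((∫ t in Ioo (0 : ℝ) 1, |u t| ^ q) ^ (1 / q)) ^ q =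
      ∫ t in Ioo (0 : ℝ) 1, |u t| ^ q := by
    rw [one_div, Real.rpow_inv_rpow (by positivity) hq0.ne']
  have hα : p * α = (p - q) * (1 / (q * (1 - 1 / r) + 1)) := by
    have hp0 : p ≠ 0 := by linarith
    rw [mul_one_div, eq_div_iff (by positivity)]
    field_simp at heq ⊢
    linear_combination heq
  exact rpow_one_div_le_two_mul_rpow_mul_rpow hq0 hp (by positivity) (by positivity)
    (by positivity) (by positivity) (by positivity) (hNq.symm ▸ hLp) le_rfl hα

/-- Gagliardo–Nirenberg-type `L^p` interpolation inequality on `(0,1)`: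
if `α(1/q + 1 − 1/r) = 1/q − 1/p` with `q ∈ [1,∞)`, `p ∈ (q,∞)`, `r ∈ (1,∞)`, `α ∈ (0,1)`,
then there is `C > 0` such that for every `u ∈ W₀^{1,r}((0,1),ℝ)` with weak derivative `g`,
`‖u‖_{L^p} ≤ C (‖u‖_{L^r} + ‖g‖_{L^r})^α ‖u‖_{L^q}^{1−α}`. -/
theorem stmt9 (q p r α : ℝ) (hq : 1 ≤ q) (hp : q < p) (hr : 1 < r) (hα : α ∈ Set.Ioo (0 : ℝ) 1)
    (heq : α * (1 / q + 1 - 1 / r) = 1 / q - 1 / p) :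
    ∃ C : ℝ, 0 < C ∧ ∀ u g : ℝ → ℝ,
      MemLp g (ENNReal.ofReal r) (volume.restrict (Set.Ioo (0 : ℝ) 1)) →
      (∀ x ∈ Set.Icc (0 : ℝ) 1, u x = ∫ t in (0 : ℝ)..x, g t) →
      u 1 = 0 →
      (∫ t in Set.Ioo (0 : ℝ) 1, |u t| ^ p) ^ (1 / p)
        ≤ C * ((∫ t in Set.Ioo (0 : ℝ) 1, |u t| ^ r) ^ (1 / r)
                + (∫ t in Set.Ioo (0 : ℝ) 1, |g t| ^ r) ^ (1 / r)) ^ α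
            * ((∫ t in Set.Ioo (0 : ℝ) 1, |u t| ^ q) ^ (1 / q)) ^ (1 - α) :=
  stmt9_general q p r α hq hp hr heq
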